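/- arXiv:2005.03800 — 4 statements merged into one kernel-verified Lean document; each statement's English description precedes it below -/
import Mathlib

section
/- For any positive integer ℓ and nonnegative integer d with d < ℓ, the excess imbalance (∑_{j=1}^{ℓ} |d + ℓ + 1 - 2j|) - ⌊ℓ²/2⌋ equals ⌊d²/2⌋ if ℓ is even, and ⌈d²/2⌉ if ℓ is odd. -/
/-! The sum for `(ℓ + 1, d)` runs over `d + ℓ, d + ℓ - 2, …, d - ℓ`: dropping its first term leaves
the sum for `(ℓ, d - 1)`, dropping its last one the sum for `(ℓ, d + 1)`. Since
`(ℓ + 1)² + d² = ℓ² + (d ∓ 1)² + 2(ℓ ± d)`, induction on `ℓ` (dropping the end term that is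
non-negative) shows that the total imbalance is `⌊(ℓ² + d²)/2⌋` whenever `|d| ≤ ℓ + 1`. Subtracting
`⌊ℓ²/2⌋` leaves `⌊d²/2⌋` or `⌈d²/2⌉` according to the parity of `ℓ`. -/

def totalImbalance (ℓ : ℕ) (d : ℤ) : ℤ :=
  ∑ j ∈ Finset.Icc 1 ℓ, |d + ℓ + 1 - 2 * (j : ℤ)|

lemma totalImbalance_succ (ℓ : ℕ) (d : ℤ) :
    totalImbalance (ℓ + 1) d = totalImbalance ℓ (d + 1) + |d - ℓ| := by
  unfold totalImbalance
  rw [Finset.sum_Icc_succ_top (by omega)]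
  push_cast
  congr 1
  · exact Finset.sum_congr rfl fun j _ => congr_arg abs (by ring)
  · exact congr_arg abs (by ring)

lemma totalImbalance_succ' (ℓ : ℕ) (d : ℤ) :
    totalImbalance (ℓ + 1) d = |d + ℓ| + totalImbalance ℓ (d - 1) := by
  unfold totalImbalance
  rw [Finset.Icc_eq_cons_Ioc (by omega), Finset.sum_cons, ← Finset.Icc_add_one_left_eq_Ioc,
    ← Finset.map_add_right_Icc, Finset.sum_map]
  push_cast
  congr 1
  · exact congr_arg abs (by ring)
  · refine Finset.sum_congr rfl fun j _ => congr_arg abs ?_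
    simp only [addRightEmbedding_apply]
    push_cast
    ring

theorem totalImbalance_eq (ℓ : ℕ) (d : ℤ) (hd : |d| ≤ ℓ + 1) :
    totalImbalance ℓ d = (ℓ ^ 2 + d ^ 2) / 2 := by
  induction ℓ generalizing d with
  | zero =>
    obtain ⟨hd₁, hd₂⟩ := abs_le.mp hd
    push_cast at hd₁ hd₂
    interval_cases d <;> rfl
  | succ ℓ ih =>
    rw [abs_le] at hd
    push_cast at hd ⊢
    rcases le_or_gt 0 d with hd_nonneg | hd_neg
    · rw [totalImbalance_succ', ih (d - 1) (abs_le.mpr ⟨by linarith, by linarith⟩),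
        abs_of_nonneg (by positivity)]
      have : ((ℓ : ℤ) + 1) ^ 2 + d ^ 2 = ℓ ^ 2 + (d - 1) ^ 2 + 2 * (d + ℓ) := by ring
      omega
    · rw [totalImbalance_succ, ih (d + 1) (abs_le.mpr ⟨by linarith, by linarith⟩),
        abs_of_neg (by linarith)]
      have : ((ℓ : ℤ) + 1) ^ 2 + d ^ 2 = ℓ ^ 2 + (d + 1) ^ 2 + 2 * (ℓ - d) := by ring
      omega

lemma sq_add_ediv_two_sub_sq_ediv_two (ℓ : ℕ) (x : ℤ) :
    ((ℓ : ℤ) ^ 2 + x) / 2 - (ℓ : ℤ) ^ 2 / 2 = if Even ℓ then x / 2 else (x + 1) / 2 := by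
  split_ifs with hℓ
  · obtain ⟨m, rfl⟩ := hℓ
    have : ((m + m : ℕ) : ℤ) ^ 2 = 2 * (2 * m ^ 2) := by push_cast; ring
    omega
  · obtain ⟨m, rfl⟩ := Nat.not_even_iff_odd.mp hℓ
    have : ((2 * m + 1 : ℕ) : ℤ) ^ 2 = 2 * (2 * (m ^ 2 + m)) + 1 := by push_cast; ring
    omega

theorem stmt_6_general (ℓ d : ℕ) (hdl : d < ℓ) :
    (∑ j ∈ Finset.Icc 1 ℓ, |(d : ℤ) + (ℓ : ℤ) + 1 - 2 * (j : ℤ)|) - (ℓ : ℤ) ^ 2 / 2 =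
      if Even ℓ then (d : ℤ) ^ 2 / 2 else ((d : ℤ) ^ 2 + 1) / 2 := by
  have hd : |(d : ℤ)| ≤ ℓ + 1 := by rw [Nat.abs_cast]; omega
  rw [← sq_add_ediv_two_sub_sq_ediv_two, ← totalImbalance_eq ℓ d hd, totalImbalance]

theorem stmt_6 (ℓ d : ℕ) (hpos : 0 < ℓ) (hdl : d < ℓ) :
    (∑ j ∈ Finset.Icc 1 ℓ, |(d : ℤ) + (ℓ : ℤ) + 1 - 2 * (j : ℤ)|) - (ℓ : ℤ) ^ 2 / 2 =
      if Even ℓ then (d : ℤ) ^ 2 / 2 else ((d : ℤ) ^ 2 + 1) / 2 :=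
  stmt_6_general ℓ d hdl
end

section
/- Let G be a connected graph consisting of a single vertex v adjacent to all vertices of r disjoint cliques C_1, ..., C_r of sizes a_1, ..., a_r (no edges between distinct cliques). Then the minimum imbalance of G over all vertex orderings equals ∑_{i=1}^r (⌊a_i²/2⌋ + (a_i mod 2)) + min_{A⊆[r]} |∑_{i∈A} a_i − ∑_{i∉A} a_i|. -/
/-- Number of neighbors of `v` preceding `v` in the ordering `σ`. -/
noncomputable def predCount {V : Type*} [Fintype V] (G : SimpleGraph V)
    (σ : V ≃ Fin (Fintype.card V)) (v : V) : ℕ :=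
  Nat.card {u : V // G.Adj v u ∧ σ u < σ v}

/-- Number of neighbors of `v` following `v` in the ordering `σ`. -/
noncomputable def succCount {V : Type*} [Fintype V] (G : SimpleGraph V)
    (σ : V ≃ Fin (Fintype.card V)) (v : V) : ℕ :=
  Nat.card {u : V // G.Adj v u ∧ σ v < σ u}

/-- The imbalance of the ordering `σ`. -/
noncomputable def imbalance {V : Type*} [Fintype V] (G : SimpleGraph V)
    (σ : V ≃ Fin (Fintype.card V)) : ℤ :=
  ∑ v : V, |(predCount G σ v : ℤ) - (succCount G σ v : ℤ)|

/-- The graph consisting of an apex vertex `none` joined completely to `r`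
vertex-disjoint cliques of sizes `a 0, …, a (r-1)`, with no edges between
distinct cliques. -/
def apexCliques (r : ℕ) (a : Fin r → ℕ) :
    SimpleGraph (Option (Σ i : Fin r, Fin (a i))) :=
  SimpleGraph.fromRel fun x y =>
    x = none ∨ ∃ (i : Fin r) (p q : Fin (a i)), x = some ⟨i, p⟩ ∧ y = some ⟨i, q⟩

/-!
Fix an ordering and let `k i` be the number of vertices of the `i`-th clique placed before the
apex `v`. Inside a clique the imbalances depend only on `k i`, and summing them gives
`⌊a²/2⌋ + (a mod 2) + 2 min(k, a - k)`; the apex itself contributes `|2 ∑ k i - ∑ a i|`.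
Rounding every `k i` to `0` or `a i`, whichever is nearer, moves `2 ∑ k i` by at most
`2 ∑ min(k i, a i - k i)`, so the imbalance is at least the bound for the set `A` of cliques that
are mostly before `v`. Conversely, placing the cliques of `A`, then `v`, then the remaining
cliques attains the bound for `A`.
-/

namespace ApexCliques

open Finset Function

/-- The total imbalance of a clique of size `a` with `k` vertices before the apex: the vertex with
`j` clique vertices before it has `j` neighbours on the left, `a - 1 - j` on the right, and the
apex on one side. -/
def cliqueImbalance (a k : ℕ) : ℤ :=
  ∑ j ∈ range a, if j < k then |2 * (j : ℤ) - a| else |2 * (j : ℤ) + 2 - a|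

lemma cliqueImbalance_add_two_zero (a : ℕ) :
    cliqueImbalance (a + 2) 0 = cliqueImbalance a 0 + 2 * a + 2 := by
  simp only [cliqueImbalance, Nat.not_lt_zero, if_false]
  rw [sum_range_succ, sum_range_succ']
  push_cast
  have hshift : ∀ j : ℕ, |2 * ((j : ℤ) + 1) + 2 - (a + 2)| = |2 * (j : ℤ) + 2 - a| :=
    fun j => by ring_nf
  have hfirst : |(2 : ℤ) - (a + 2)| = a := by rw [abs_of_nonpos (by omega)]; ring
  have hlast : |2 * ((a : ℤ) + 1) + 2 - (a + 2)| = a + 2 := by rw [abs_of_nonneg (by omega)]; ring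
  rw [hfirst, hlast]
  simp only [hshift]
  ring

lemma cliqueImbalance_zero (a : ℕ) : cliqueImbalance a 0 = (a : ℤ) ^ 2 / 2 + (a : ℤ) % 2 := by
  induction a using Nat.twoStepInduction with
  | zero => simp [cliqueImbalance]
  | one => simp [cliqueImbalance]
  | more a ih _ =>
    rw [cliqueImbalance_add_two_zero, ih]
    push_cast
    have hsq : ((a : ℤ) + 2) ^ 2 = (a : ℤ) ^ 2 + 2 * (2 * a + 2) := by ring
    rw [hsq]
    omega

lemma cliqueImbalance_succ (a k : ℕ) :
    cliqueImbalance a (k + 1) =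
      cliqueImbalance a k + if k < a then |2 * (k : ℤ) - a| - |2 * (k : ℤ) + 2 - a| else 0 := by
  have hterm : ∀ j : ℕ,
      (if j < k + 1 then |2 * (j : ℤ) - a| else |2 * (j : ℤ) + 2 - a|) =
        (if j < k then |2 * (j : ℤ) - a| else |2 * (j : ℤ) + 2 - a|) +
          if j = k then |2 * (k : ℤ) - a| - |2 * (k : ℤ) + 2 - a| else 0 := by
    intro j
    rcases lt_trichotomy j k with h | rfl | h
    · simp [h, h.ne, Nat.lt_succ_of_lt h]
    · simp
    · simp [h.ne', not_lt.2 h.le, show ¬ j < k + 1 by omega]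
  simp only [cliqueImbalance, hterm, sum_add_distrib, sum_ite_eq', mem_range]

lemma cliqueImbalance_eq {a k : ℕ} (hk : k ≤ a) :
    cliqueImbalance a k = (a : ℤ) ^ 2 / 2 + (a : ℤ) % 2 + 2 * (min k (a - k) : ℕ) := by
  induction k with
  | zero => simp [cliqueImbalance_zero]
  | succ k ih =>
    rw [cliqueImbalance_succ, if_pos (by omega), ih (by omega)]
    rcases abs_cases (2 * (k : ℤ) - a) with ⟨e1, _⟩ | ⟨e1, _⟩ <;>
      rcases abs_cases (2 * (k : ℤ) + 2 - a) with ⟨e2, _⟩ | ⟨e2, _⟩ <;>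
      · rw [e1, e2]; push_cast; omega

lemma sum_sub_sum_compl_eq {ι R : Type*} [Fintype ι] [DecidableEq ι] [CommRing R]
    (s : Finset ι) (f : ι → R) :
    ∑ i ∈ s, f i - ∑ i ∈ sᶜ, f i = 2 * ∑ i ∈ s, f i - ∑ i, f i := by
  rw [← sum_add_sum_compl s f]
  ring

lemma abs_sum_sub_sum_compl_le {ι : Type*} [Fintype ι] [DecidableEq ι] {a k : ι → ℕ}
    (hk : ∀ i, k i ≤ a i) {A : Finset ι} (hA : ∀ i, i ∈ A ↔ a i < 2 * k i) :
    |∑ i ∈ A, (a i : ℤ) - ∑ i ∈ Aᶜ, (a i : ℤ)| ≤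
      |2 * ∑ i, (k i : ℤ) - ∑ i, (a i : ℤ)| + 2 * ∑ i, ((min (k i) (a i - k i) : ℕ) : ℤ) := by
  have hterm : ∀ i, |(if i ∈ A then (a i : ℤ) else 0) - k i| = (min (k i) (a i - k i) : ℕ) := by
    intro i
    have := hk i
    by_cases h : a i < 2 * k i
    · rw [if_pos ((hA i).2 h), abs_of_nonneg (by omega)]
      omega
    · rw [if_neg (mt (hA i).1 h), abs_of_nonpos (by omega)]
      omega
  have hsplit : ∑ i ∈ A, (a i : ℤ) - ∑ i ∈ Aᶜ, (a i : ℤ) =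
      (2 * ∑ i, (k i : ℤ) - ∑ i, (a i : ℤ)) +
        2 * ∑ i, ((if i ∈ A then (a i : ℤ) else 0) - k i) := by
    rw [sum_sub_sum_compl_eq, sum_sub_distrib, sum_ite_mem, univ_inter]
    ring
  calc _ ≤ |2 * ∑ i, (k i : ℤ) - ∑ i, (a i : ℤ)| +
          2 * |∑ i, ((if i ∈ A then (a i : ℤ) else 0) - k i)| := by
        rw [hsplit, ← abs_two, ← abs_mul, abs_two]
        exact abs_add_le _ _
    _ ≤ _ := by
        gcongr
        exact (abs_sum_le_sum_abs _ _).trans_eq (sum_congr rfl fun i _ => hterm i)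

section Rank

variable {α L : Type*} [Fintype α] [LinearOrder L]

def rankBy (f : α → L) (p : α) : ℕ := #{q | f q < f p}

lemma rankBy_lt_card (f : α → L) (p : α) : rankBy f p < Fintype.card α :=
  card_lt_univ_of_notMem (x := p) (by simp)

lemma rankBy_lt_rankBy (f : α → L) {p q : α} (h : f p < f q) : rankBy f p < rankBy f q :=
  card_lt_card ⟨fun x hx => by simp only [mem_filter_univ] at hx ⊢; exact hx.trans h,
    fun hsub => by simpa using hsub (show p ∈ ({x | f x < f q} : Finset α) by simpa using h)⟩

lemma rankBy_add_card_filter_gt {f : α → L} (hf : Injective f) (p : α) :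
    rankBy f p + #{q | f p < f q} + 1 = Fintype.card α := by
  classical
  have hunion : ({q | f q < f p} : Finset α) ∪ ({q | f p < f q} : Finset α) = univ.erase p := by
    ext q
    simp only [mem_union, mem_filter_univ, mem_erase, mem_univ, and_true, ← hf.ne_iff,
      lt_or_lt_iff_ne]
  have hdisj : Disjoint ({q | f q < f p} : Finset α) ({q | f p < f q} : Finset α) :=
    disjoint_filter.2 fun _ _ h => h.not_gt
  rw [rankBy, ← card_union_of_disjoint hdisj, hunion, card_erase_add_one (mem_univ p), card_univ]

lemma rankBy_injective {f : α → L} (hf : Injective f) : Injective (rankBy f) := by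
  intro p q h
  by_contra hne
  rcases lt_or_gt_of_ne (hf.ne hne) with hlt | hlt
  · exact (rankBy_lt_rankBy f hlt).ne h
  · exact (rankBy_lt_rankBy f hlt).ne' h

noncomputable def rankEquiv {f : α → L} (hf : Injective f) : α ≃ Fin (Fintype.card α) :=
  Equiv.ofBijective (fun p => ⟨rankBy f p, rankBy_lt_card f p⟩)
    ((Fintype.bijective_iff_injective_and_card _).2
      ⟨fun _ _ h => rankBy_injective hf (Fin.val_eq_of_eq h), (Fintype.card_fin _).symm⟩)

lemma sum_rankBy {M : Type*} [AddCommMonoid M] {f : α → L} (hf : Injective f) (F : ℕ → M) :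
    ∑ p, F (rankBy f p) = ∑ j ∈ range (Fintype.card α), F j := by
  rw [← Fin.sum_univ_eq_sum_range]
  exact Fintype.sum_equiv (rankEquiv hf) _ _ fun _ => rfl

lemma rankBy_lt_card_filter_lt_iff (f : α → L) {t : L} (ht : ∀ p, f p ≠ t) (p : α) :
    rankBy f p < #{q | f q < t} ↔ f p < t := by
  constructor
  · intro h
    by_contra hle
    have hgt : t < f p := lt_of_le_of_ne (not_lt.1 hle) (ht p).symm
    refine h.not_ge (card_le_card fun x hx => ?_)
    simp only [mem_filter_univ] at hx ⊢
    exact hx.trans hgt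
  · intro h
    exact card_lt_card ⟨fun x hx => by simp only [mem_filter_univ] at hx ⊢; exact hx.trans h,
      fun hsub => by simpa using hsub (show p ∈ ({x | f x < t} : Finset α) by simpa using h)⟩

lemma rankBy_equiv_eq {N : ℕ} (σ : α ≃ Fin N) (p : α) : rankBy σ p = σ p := by
  rw [rankBy, ← Fin.card_Iio (σ p), ← card_map σ.toEmbedding]
  congr 1
  ext j
  simp

lemma exists_equiv_fin_lt_of_lt (φ : α → L) :
    ∃ σ : α ≃ Fin (Fintype.card α), ∀ u v, φ u < φ v → σ u < σ v := by
  let e := Fintype.equivFin α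
  have hinj : Injective fun u => toLex (φ u, e u) :=
    fun u v h => e.injective (congrArg (fun x => (ofLex x).2) h)
  refine ⟨rankEquiv hinj, fun u v h => ?_⟩
  exact rankBy_lt_rankBy _ (Prod.Lex.toLex_lt_toLex.2 (Or.inl h))

end Rank

section Graph

variable {r : ℕ} {a : Fin r → ℕ}

lemma apexCliques_adj_none {u : Option (Σ i : Fin r, Fin (a i))} :
    (apexCliques r a).Adj none u ↔ u ≠ none := by
  simp [apexCliques, eq_comm]

lemma apexCliques_adj_some_none (x : Σ i : Fin r, Fin (a i)) :
    (apexCliques r a).Adj (some x) none :=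
  (apexCliques_adj_none.2 (Option.some_ne_none x)).symm

lemma apexCliques_adj_some_same {i : Fin r} {p q : Fin (a i)} :
    (apexCliques r a).Adj (some ⟨i, p⟩) (some ⟨i, q⟩) ↔ p ≠ q := by
  simp [apexCliques]

lemma apexCliques_not_adj_some_of_ne {i j : Fin r} (h : i ≠ j) (p : Fin (a i)) (q : Fin (a j)) :
    ¬ (apexCliques r a).Adj (some ⟨i, p⟩) (some ⟨j, q⟩) := by
  simp [apexCliques, h, h.symm]

lemma natCard_adj_and_eq_card_filter {V : Type*} [Fintype V] {G : SimpleGraph V} {v : V}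
    (hv : ∀ u, u ≠ v → G.Adj v u) (R : V → Prop) [DecidablePred R] (hR : ¬ R v) :
    Nat.card {u // G.Adj v u ∧ R u} = #{u | R u} := by
  rw [← Fintype.card_subtype, ← Nat.card_eq_fintype_card]
  exact Nat.card_congr <| Equiv.subtypeEquivRight fun u =>
    and_iff_right_of_imp fun hu => hv u (by rintro rfl; exact hR hu)

lemma natCard_apexCliques_adj_some_and {i : Fin r} {p : Fin (a i)}
    (R : Option (Σ i : Fin r, Fin (a i)) → Prop) [DecidablePred R] (hR : ¬ R (some ⟨i, p⟩)) :
    Nat.card {u // (apexCliques r a).Adj (some ⟨i, p⟩) u ∧ R u} =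
      (if R none then 1 else 0) + #{q | R (some ⟨i, q⟩)} := by
  classical
  rw [Nat.card_eq_fintype_card, Fintype.card_subtype, card_filter, Fintype.sum_option,
    ← univ_sigma_univ, sum_sigma, sum_eq_single i, card_filter]
  · congr 1
    · simp [apexCliques_adj_some_none]
    · refine sum_congr rfl fun q _ => ?_
      by_cases hq : q = p
      · subst hq; simp [hR]
      · simp [apexCliques_adj_some_same, Ne.symm hq]
  · intro j _ hj
    simp [apexCliques_not_adj_some_of_ne (Ne.symm hj)]
  · simp

variable
  (σ : Option (Σ i : Fin r, Fin (a i)) ≃ Fin (Fintype.card (Option (Σ i : Fin r, Fin (a i)))))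

def numBeforeApex (i : Fin r) : ℕ := #{q : Fin (a i) | σ (some ⟨i, q⟩) < σ none}

lemma injective_clique (i : Fin r) : Injective fun q : Fin (a i) => σ (some ⟨i, q⟩) :=
  σ.injective.comp ((Option.some_injective _).comp sigma_mk_injective)

lemma val_apex_eq_sum_numBeforeApex : (σ none : ℕ) = ∑ i, numBeforeApex σ i := by
  rw [← rankBy_equiv_eq σ none, rankBy, card_filter, Fintype.sum_option, ← univ_sigma_univ,
    sum_sigma]
  simp only [lt_irrefl, if_false, zero_add, numBeforeApex, card_filter]

lemma predCount_apex : predCount (apexCliques r a) σ none = σ none := by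
  rw [predCount, natCard_adj_and_eq_card_filter (fun _ hu => apexCliques_adj_none.2 hu) _
    (lt_irrefl (σ none))]
  exact rankBy_equiv_eq σ none

lemma predCount_apex_add_succCount_apex :
    predCount (apexCliques r a) σ none + succCount (apexCliques r a) σ none = ∑ i, a i := by
  rw [succCount, natCard_adj_and_eq_card_filter (fun _ hu => apexCliques_adj_none.2 hu) _
    (lt_irrefl (σ none)), predCount_apex, ← rankBy_equiv_eq σ none]
  have h := rankBy_add_card_filter_gt σ.injective none
  simp only [Fintype.card_option, Fintype.card_sigma, Fintype.card_fin] at h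
  omega

lemma abs_predCount_sub_succCount_some (i : Fin r) (p : Fin (a i)) :
    |(predCount (apexCliques r a) σ (some ⟨i, p⟩) : ℤ) -
        succCount (apexCliques r a) σ (some ⟨i, p⟩)| =
      if rankBy (fun q => σ (some ⟨i, q⟩)) p < numBeforeApex σ i
      then |2 * (rankBy (fun q => σ (some ⟨i, q⟩)) p : ℤ) - a i|
      else |2 * (rankBy (fun q => σ (some ⟨i, q⟩)) p : ℤ) + 2 - a i| := by
  set f : Fin (a i) → Fin _ := fun q => σ (some ⟨i, q⟩)
  have hf : Injective f := injective_clique σ i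
  have hne : ∀ q, f q ≠ σ none := fun q h => by simpa [f] using σ.injective h
  have hpred : predCount (apexCliques r a) σ (some ⟨i, p⟩) =
      (if σ none < f p then 1 else 0) + rankBy f p :=
    natCard_apexCliques_adj_some_and _ (lt_irrefl (f p))
  have hsucc : succCount (apexCliques r a) σ (some ⟨i, p⟩) =
      (if f p < σ none then 1 else 0) + #{q | f p < f q} :=
    natCard_apexCliques_adj_some_and _ (lt_irrefl (f p))
  have hcard := rankBy_add_card_filter_gt hf p
  rw [Fintype.card_fin] at hcard
  have hbefore : rankBy f p < numBeforeApex σ i ↔ f p < σ none :=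
    rankBy_lt_card_filter_lt_iff f hne p
  rw [hpred, hsucc]
  rcases lt_or_gt_of_ne (hne p) with h | h
  · rw [if_pos (hbefore.2 h), if_neg h.not_gt, if_pos h]
    congr 1
    omega
  · rw [if_neg (mt hbefore.1 h.not_gt), if_pos h, if_neg h.not_gt]
    congr 1
    omega

lemma sum_abs_predCount_sub_succCount_clique (i : Fin r) :
    ∑ p : Fin (a i), |(predCount (apexCliques r a) σ (some ⟨i, p⟩) : ℤ) -
        succCount (apexCliques r a) σ (some ⟨i, p⟩)| =
      cliqueImbalance (a i) (numBeforeApex σ i) := by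
  simp only [abs_predCount_sub_succCount_some]
  rw [sum_rankBy (injective_clique σ i) fun j => if j < numBeforeApex σ i
    then |2 * (j : ℤ) - a i| else |2 * (j : ℤ) + 2 - a i|, Fintype.card_fin]
  rfl

lemma imbalance_apexCliques :
    imbalance (apexCliques r a) σ =
      |2 * (σ none : ℤ) - ∑ i, (a i : ℤ)| + ∑ i, cliqueImbalance (a i) (numBeforeApex σ i) := by
  rw [imbalance, Fintype.sum_option, ← univ_sigma_univ, sum_sigma]
  congr 1
  · have h := predCount_apex_add_succCount_apex σ
    rw [predCount_apex] at h ⊢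
    congr 1
    have hz : ((σ none : ℕ) : ℤ) + succCount (apexCliques r a) σ none = ∑ i, (a i : ℤ) := by
      exact_mod_cast h
    linarith
  · exact sum_congr rfl fun i _ => sum_abs_predCount_sub_succCount_clique σ i

lemma exists_le_imbalance : ∃ A : Finset (Fin r),
    ∑ i, ((a i : ℤ) ^ 2 / 2 + (a i : ℤ) % 2) + |∑ i ∈ A, (a i : ℤ) - ∑ i ∈ Aᶜ, (a i : ℤ)| ≤
      imbalance (apexCliques r a) σ := by
  have hk : ∀ i, numBeforeApex σ i ≤ a i := fun i =>
    (card_filter_le _ _).trans (card_univ.trans (Fintype.card_fin _)).le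
  refine ⟨({i | a i < 2 * numBeforeApex σ i} : Finset (Fin r)), ?_⟩
  have hcliques : ∑ i, cliqueImbalance (a i) (numBeforeApex σ i) =
      ∑ i, ((a i : ℤ) ^ 2 / 2 + (a i : ℤ) % 2) +
        2 * ∑ i, ((min (numBeforeApex σ i) (a i - numBeforeApex σ i) : ℕ) : ℤ) := by
    rw [sum_congr rfl fun i _ => cliqueImbalance_eq (hk i), sum_add_distrib, mul_sum]
  rw [imbalance_apexCliques, hcliques, val_apex_eq_sum_numBeforeApex, Nat.cast_sum]
  linarith [abs_sum_sub_sum_compl_le hk (A := {i | a i < 2 * numBeforeApex σ i}) (by simp)]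

lemma exists_imbalance_eq (A : Finset (Fin r)) :
    ∃ σ, imbalance (apexCliques r a) σ =
      ∑ i, ((a i : ℤ) ^ 2 / 2 + (a i : ℤ) % 2) + |∑ i ∈ A, (a i : ℤ) - ∑ i ∈ Aᶜ, (a i : ℤ)| := by
  obtain ⟨σ, hσ⟩ := exists_equiv_fin_lt_of_lt fun u : Option (Σ i : Fin r, Fin (a i)) =>
    u.elim 1 fun x => if x.1 ∈ A then 0 else 2
  have hbefore : ∀ i, numBeforeApex σ i = if i ∈ A then a i else 0 := by
    intro i
    split_ifs with hi
    · rw [numBeforeApex, filter_true_of_mem fun q _ => hσ _ _ (by simp [hi]), card_univ,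
        Fintype.card_fin]
    · rw [numBeforeApex, filter_false_of_mem fun q _ => (hσ _ _ (by simp [hi])).not_gt,
        card_empty]
  have hclique : ∀ i, cliqueImbalance (a i) (numBeforeApex σ i) =
      (a i : ℤ) ^ 2 / 2 + (a i : ℤ) % 2 := by
    intro i
    rw [hbefore]
    split_ifs <;> simp [cliqueImbalance_eq]
  refine ⟨σ, ?_⟩
  rw [imbalance_apexCliques, val_apex_eq_sum_numBeforeApex, sum_congr rfl fun i _ => hclique i,
    sum_congr rfl fun i _ => hbefore i, sum_ite_mem, univ_inter, sum_sub_sum_compl_eq]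
  push_cast
  ring

end Graph

end ApexCliques

open Finset ApexCliques in
theorem stmt_11 (r : ℕ) (a : Fin r → ℕ) :
    IsLeast
      (Set.range fun σ : Option (Σ i : Fin r, Fin (a i)) ≃
          Fin (Fintype.card (Option (Σ i : Fin r, Fin (a i)))) =>
        imbalance (apexCliques r a) σ)
      ((∑ i : Fin r, ((a i : ℤ) ^ 2 / 2 + (a i : ℤ) % 2)) +
        ((Finset.univ : Finset (Fin r)).powerset.image fun A =>
            |∑ i ∈ A, (a i : ℤ) - ∑ i ∈ Aᶜ, (a i : ℤ)|).min' (by simp)) := by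
  set gaps := univ.powerset.image fun A : Finset (Fin r) =>
    |∑ i ∈ A, (a i : ℤ) - ∑ i ∈ Aᶜ, (a i : ℤ)|
  constructor
  · obtain ⟨A, -, hA⟩ := mem_image.1 (gaps.min'_mem (by simp [gaps]))
    obtain ⟨σ, hσ⟩ := exists_imbalance_eq (a := a) A
    exact ⟨σ, hσ.trans (congrArg _ hA)⟩
  · rintro _ ⟨σ, rfl⟩
    obtain ⟨A, hA⟩ := exists_le_imbalance σ
    refine le_trans ?_ hA
    gcongr
    exact min'_le _ _ (mem_image_of_mem _ (mem_powerset.2 (subset_univ A)))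
end

section
/- Let G be a graph with twin cover S such that the components of G∖S are cliques C_1,...,C_r of sizes ℓ_1,...,ℓ_r. Then the minimum imbalance of G satisfies I(G) ≥ ∑_{i=1}^r γ(ℓ_i), where γ(ℓ) = ⌊ℓ²/2⌋. -/
/-!
True twins `u, w` are adjacent and every other neighbour of one is a neighbour of the other,
so if `u` precedes `w` in an ordering then `w` sees one more earlier neighbour (namely `u`) and
one fewer later neighbour than `u` does. Hence along a clique of true twins the signed
imbalances `p - q` are integers at mutual distance at least 2, and `ℓ` such integers have
absolute values summing to at least `⌊ℓ²/2⌋`: the smallest and the largest are at distance at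
least `2(ℓ - 1)`, and induction removes them both.
-/

open Finset

namespace Int

/-- `s` and `s + 1` are disjoint subsets of `[min s, max s + 1]`. -/
theorem two_mul_card_le_max'_sub_min'_add_two (s : Finset ℤ) (hne : s.Nonempty)
    (hs : ∀ x ∈ s, ∀ y ∈ s, x < y → x + 2 ≤ y) :
    2 * (#s : ℤ) ≤ s.max' hne - s.min' hne + 2 := by
  have hdisj : Disjoint s (s.map (addRightEmbedding 1)) := by
    rw [disjoint_left]
    intro x hx hx'
    obtain ⟨y, hy, rfl⟩ := mem_map.1 hx'
    have := hs y hy _ hx (by simp)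
    simp at this
  have hsub : s ∪ s.map (addRightEmbedding 1) ⊆ Icc (s.min' hne) (s.max' hne + 1) := by
    intro x hx
    rcases mem_union.1 hx with hx | hx
    · have := min'_le s x hx
      have := le_max' s x hx
      rw [mem_Icc]
      omega
    · obtain ⟨y, hy, rfl⟩ := mem_map.1 hx
      have := min'_le s y hy
      have := le_max' s y hy
      rw [mem_Icc, addRightEmbedding_apply]
      omega
  have hcard := card_le_card hsub
  have := min'_le s _ (max'_mem s hne)
  rw [card_union_of_disjoint hdisj, card_map, Int.card_Icc] at hcard
  omega

theorem card_sq_div_two_le_sum_abs (s : Finset ℤ)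
    (hs : ∀ x ∈ s, ∀ y ∈ s, x < y → x + 2 ≤ y) :
    (#s : ℤ) ^ 2 / 2 ≤ ∑ x ∈ s, |x| := by
  induction h : #s using Nat.strong_induction_on generalizing s with
  | _ n ih =>
  rcases lt_or_ge n 2 with hn | hn
  · have : (n : ℤ) ^ 2 / 2 = 0 := by interval_cases n <;> rfl
    rw [this]
    exact sum_nonneg fun x _ => abs_nonneg x
  obtain ⟨m, rfl⟩ : ∃ m, n = m + 2 := ⟨n - 2, by omega⟩
  have hne : s.Nonempty := card_pos.1 (by omega)
  set a := s.min' hne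
  set b := s.max' hne
  have hab : a < b := min'_lt_max'_of_card s (by omega)
  have ha : a ∈ s.erase b := mem_erase.2 ⟨hab.ne, min'_mem s hne⟩
  set t := (s.erase b).erase a
  have ht : #t = m := by
    rw [card_erase_of_mem ha, card_erase_of_mem (max'_mem s hne), h]
    rfl
  have hsum : ∑ x ∈ s, |x| = |a| + |b| + ∑ x ∈ t, |x| := by
    rw [← add_sum_erase s _ (max'_mem s hne), ← add_sum_erase _ _ ha]
    ring
  have ht_sum := ih m (by omega) t
    (fun x hx y hy => hs x (mem_of_mem_erase (mem_of_mem_erase hx))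
      y (mem_of_mem_erase (mem_of_mem_erase hy))) ht
  have hspan := two_mul_card_le_max'_sub_min'_add_two s hne hs
  have hsq : ((m + 2 : ℕ) : ℤ) ^ 2 / 2 = (m : ℤ) ^ 2 / 2 + (2 * m + 2) := by
    rw [show ((m + 2 : ℕ) : ℤ) ^ 2 = m ^ 2 + 2 * (2 * m + 2) by push_cast; ring,
      Int.add_mul_ediv_left _ _ two_ne_zero]
  rw [h] at hspan
  rw [hsum, hsq]
  push_cast at hspan
  linarith [neg_abs_le a, le_abs_self b]

end Int

theorem Finset.card_sq_div_two_le_sum_abs {ι : Type*} (T : Finset ι) (g : ι → ℤ)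
    (hg : ∀ u ∈ T, ∀ w ∈ T, u ≠ w → 2 ≤ |g u - g w|) :
    (#T : ℤ) ^ 2 / 2 ≤ ∑ v ∈ T, |g v| := by
  classical
  have hinj : Set.InjOn g T := fun u hu w hw huw => by
    by_contra hne
    simpa [huw] using hg u hu w hw hne
  rw [← card_image_of_injOn hinj, ← sum_image (f := fun x => |x|) hinj]
  refine Int.card_sq_div_two_le_sum_abs _ ?_
  simp only [mem_image]
  rintro _ ⟨u, hu, rfl⟩ _ ⟨w, hw, rfl⟩ hlt
  have := hg u hu w hw (by rintro rfl; exact hlt.false)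
  rw [abs_sub_comm, abs_of_pos (sub_pos.2 hlt)] at this
  omega

namespace SimpleGraph

variable {V : Type*} [Fintype V] (G : SimpleGraph V) (σ : V ≃ Fin (Fintype.card V))

theorem succCount_eq_predCount_revPerm (v : V) :
    succCount G σ v = predCount G (σ.trans Fin.revPerm) v := by
  simp [succCount, predCount, Fin.rev_lt_rev]

variable {G} {u w : V}

theorem predCount_lt_of_twins (htwin : ∀ x, (G.Adj u x ∨ x = u) ↔ (G.Adj w x ∨ x = w))
    (hlt : σ u < σ w) : predCount G σ u < predCount G σ w := by
  have huw : G.Adj w u := ((htwin u).1 (Or.inr rfl)).resolve_right (by rintro rfl; simp at hlt)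
  change Nat.card {x | G.Adj u x ∧ σ x < σ u} < Nat.card {x | G.Adj w x ∧ σ x < σ w}
  rw [Nat.card_coe_set_eq, Nat.card_coe_set_eq]
  refine Set.ncard_lt_ncard ⟨fun x ⟨hx, hxu⟩ => ⟨?_, hxu.trans hlt⟩, fun hsub => ?_⟩
  · exact ((htwin x).1 (Or.inl hx)).resolve_right (by rintro rfl; exact (hxu.trans hlt).false)
  · exact G.irrefl (hsub ⟨huw, hlt⟩).1

theorem succCount_lt_of_twins (htwin : ∀ x, (G.Adj u x ∨ x = u) ↔ (G.Adj w x ∨ x = w))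
    (hlt : σ u < σ w) : succCount G σ w < succCount G σ u := by
  rw [succCount_eq_predCount_revPerm, succCount_eq_predCount_revPerm]
  exact predCount_lt_of_twins _ (fun x => (htwin x).symm) (by simpa [Fin.rev_lt_rev] using hlt)

theorem two_le_abs_sub_of_twins (htwin : ∀ x, (G.Adj u x ∨ x = u) ↔ (G.Adj w x ∨ x = w))
    (hne : u ≠ w) :
    2 ≤ |((predCount G σ u : ℤ) - succCount G σ u) -
      ((predCount G σ w : ℤ) - succCount G σ w)| := by
  rcases lt_or_gt_of_ne (σ.injective.ne hne) with hlt | hlt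
  · have := predCount_lt_of_twins σ htwin hlt
    have := succCount_lt_of_twins σ htwin hlt
    rw [abs_sub_comm]
    exact le_abs.2 (Or.inl (by omega))
  · have := predCount_lt_of_twins σ (fun x => (htwin x).symm) hlt
    have := succCount_lt_of_twins σ (fun x => (htwin x).symm) hlt
    exact le_abs.2 (Or.inl (by omega))

end SimpleGraph

theorem stmt_12_general {V : Type*} [Fintype V] (G : SimpleGraph V)
    (r : ℕ) (C : Fin r → Finset V)
    -- the cliques are pairwise disjoint
    (hdisj : ∀ i j : Fin r, i ≠ j → Disjoint (C i) (C j))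
    -- the vertices of each clique are true twins in G
    (htwins : ∀ i : Fin r, ∀ u ∈ C i, ∀ w ∈ C i, ∀ x : V,
      (G.Adj u x ∨ x = u) ↔ (G.Adj w x ∨ x = w)) :
    ∀ σ : V ≃ Fin (Fintype.card V),
      imbalance G σ ≥ ∑ i : Fin r, ((C i).card : ℤ) ^ 2 / 2 := by
  intro σ
  classical
  set g : V → ℤ := fun v => (predCount G σ v : ℤ) - succCount G σ v
  have hclique : ∀ i, ((C i).card : ℤ) ^ 2 / 2 ≤ ∑ v ∈ C i, |g v| := fun i =>
    (C i).card_sq_div_two_le_sum_abs g fun u hu w hw hne =>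
      SimpleGraph.two_le_abs_sub_of_twins σ (htwins i u hu w hw) hne
  calc ∑ i : Fin r, ((C i).card : ℤ) ^ 2 / 2
      ≤ ∑ i : Fin r, ∑ v ∈ C i, |g v| := sum_le_sum fun i _ => hclique i
    _ = ∑ v ∈ univ.biUnion C, |g v| := (sum_biUnion fun i _ j _ hij => hdisj i j hij).symm
    _ ≤ ∑ v, |g v| := sum_le_sum_of_subset_of_nonneg (subset_univ _) fun v _ _ => abs_nonneg _
    _ = imbalance G σ := rfl

theorem stmt_12 {V : Type*} [Fintype V] [DecidableEq V] (G : SimpleGraph V)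
    (S : Finset V) (r : ℕ) (C : Fin r → Finset V)
    -- the cliques are pairwise disjoint
    (hdisj : ∀ i j : Fin r, i ≠ j → Disjoint (C i) (C j))
    -- the cliques avoid the twin cover and cover its complement:
    (havoid : ∀ i : Fin r, ∀ v ∈ C i, v ∉ S)
    (hcover : ∀ v : V, v ∉ S → ∃ i : Fin r, v ∈ C i)
    -- the vertices of each clique are true twins in G
    (htwins : ∀ i : Fin r, ∀ u ∈ C i, ∀ w ∈ C i, ∀ x : V,
      (G.Adj u x ∨ x = u) ↔ (G.Adj w x ∨ x = w))
    -- each clique is indeed a clique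
    (hclique : ∀ i : Fin r, ∀ u ∈ C i, ∀ w ∈ C i, u ≠ w → G.Adj u w)
    -- no edges between distinct cliques (they are distinct components of G \ S)
    (hcross : ∀ i j : Fin r, i ≠ j → ∀ u ∈ C i, ∀ w ∈ C j, ¬ G.Adj u w) :
    ∀ σ : V ≃ Fin (Fintype.card V),
      imbalance G σ ≥ ∑ i : Fin r, ((C i).card : ℤ) ^ 2 / 2 :=
  stmt_12_general G r C hdisj htwins
end

section
/- Let G be a connected graph with a twin cover {v} of size one, whose components outside the cover are cliques of sizes ℓ_1,...,ℓ_r. Then I(G) ≥ ∑_{i=1}^r (γ(ℓ_i) + (ℓ_i mod 2)). -/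
/-!
A vertex `u` of a clique `C` of `G - v` has neighbourhood `{v} ∪ C \ {u}`, so its contribution
to the imbalance of an ordering is `|2p - ℓ|`, where `p` counts its earlier neighbours and
`ℓ = |C|`. Of two true twins, the later one sees the earlier one and all of its earlier
neighbours, so the `ℓ` values of `p` on `C` are distinct numbers in `{0, …, ℓ}`. Hence their
contributions sum to at least `∑_{j=0}^{ℓ} |2j - ℓ| - ℓ = ⌊ℓ²/2⌋ + ℓ mod 2`.
-/

open Finset

lemma sum_range_abs_two_mul_sub (ℓ : ℕ) :
    ∑ j ∈ range (ℓ + 1), |2 * (j : ℤ) - ℓ| =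
      (ℓ : ℤ) ^ 2 / 2 + (ℓ : ℤ) % 2 + ℓ := by
  induction ℓ using Nat.twoStepInduction with
  | zero => simp
  | one => simp [sum_range_succ]
  | more n ih _ =>
    -- peeling off both end terms and shifting `j ↦ j + 1` leaves the sum for `n`
    rw [sum_range_succ, sum_range_succ']
    have hshift : ∑ j ∈ range (n + 1), |2 * ((j + 1 : ℕ) : ℤ) - ((n + 2 : ℕ) : ℤ)|
        = ∑ j ∈ range (n + 1), |2 * (j : ℤ) - n| :=
      sum_congr rfl fun j _ => by push_cast; ring_nf
    have hsq : ((n : ℤ) + 2) ^ 2 = (n : ℤ) ^ 2 + 4 * n + 4 := by ring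
    rw [hshift, ih]
    push_cast
    rw [abs_of_nonpos (by omega), abs_of_nonneg (by omega)]
    omega

lemma sq_div_two_add_mod_two_le_sum_abs {α : Type*} (S : Finset α) (f : α → ℕ)
    (hinj : Set.InjOn f S) (hle : ∀ u ∈ S, f u ≤ #S) :
    (#S : ℤ) ^ 2 / 2 + (#S : ℤ) % 2 ≤ ∑ u ∈ S, |2 * (f u : ℤ) - #S| := by
  set ℓ := #S
  have himg : S.image f ⊆ range (ℓ + 1) := by
    simpa [subset_iff, Nat.lt_succ_iff] using hle
  -- `f` misses exactly one value `m ≤ ℓ`, whose term is at most `ℓ`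
  obtain ⟨m, hm⟩ : ∃ m, range (ℓ + 1) \ S.image f = {m} := by
    refine card_eq_one.1 ?_
    rw [card_sdiff_of_subset himg, card_range, card_image_of_injOn hinj]
    omega
  have hmℓ : m ≤ ℓ :=
    Nat.lt_succ_iff.1 (mem_range.1 (mem_sdiff.1 (hm ▸ mem_singleton_self m)).1)
  have hsplit := sum_sdiff (f := fun j : ℕ => |2 * (j : ℤ) - ℓ|) himg
  rw [hm, sum_singleton, sum_range_abs_two_mul_sub, sum_image hinj] at hsplit
  have hmissing : |2 * (m : ℤ) - ℓ| ≤ ℓ := abs_le.2 ⟨by omega, by omega⟩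
  linarith

section VertexOrdering

variable {V : Type*} [Fintype V] (G : SimpleGraph V) (σ : V ≃ Fin (Fintype.card V))

lemma predCount_eq_card [DecidableRel G.Adj] (u : V) :
    predCount G σ u = #{x | G.Adj u x ∧ σ x < σ u} := by
  rw [predCount, Nat.card_eq_fintype_card, Fintype.card_subtype]

lemma succCount_eq_card [DecidableRel G.Adj] (u : V) :
    succCount G σ u = #{x | G.Adj u x ∧ σ u < σ x} := by
  rw [succCount, Nat.card_eq_fintype_card, Fintype.card_subtype]

lemma predCount_add_succCount [DecidableRel G.Adj] (u : V) :
    predCount G σ u + succCount G σ u = G.degree u := by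
  classical
  rw [predCount_eq_card, succCount_eq_card, ← card_union_of_disjoint,
    ← SimpleGraph.card_neighborFinset_eq_degree]
  · congr 1
    ext x
    simp only [mem_union, mem_filter, mem_univ, true_and, SimpleGraph.mem_neighborFinset]
    constructor
    · rintro (⟨h, _⟩ | ⟨h, _⟩) <;> exact h
    · intro h
      rcases (σ.injective.ne h.ne').lt_or_gt with hlt | hlt
      exacts [Or.inl ⟨h, hlt⟩, Or.inr ⟨h, hlt⟩]
  · exact disjoint_filter.2 fun x _ h₁ h₂ => lt_asymm h₁.2 h₂.2

lemma predCount_le_degree [DecidableRel G.Adj] (u : V) : predCount G σ u ≤ G.degree u :=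
  predCount_add_succCount G σ u ▸ Nat.le_add_right _ _

variable {G}

lemma predCount_lt_predCount_of_twins {u w : V}
    (htwin : ∀ x, (G.Adj u x ∨ x = u) ↔ (G.Adj w x ∨ x = w)) (hlt : σ u < σ w) :
    predCount G σ u < predCount G σ w := by
  classical
  rw [predCount_eq_card, predCount_eq_card]
  refine card_lt_card ⟨fun x hx => ?_, fun hsub => ?_⟩
  · simp only [mem_filter, mem_univ, true_and] at hx ⊢
    have hxw : x ≠ w := by rintro rfl; exact lt_asymm hx.2 hlt
    exact ⟨((htwin x).1 (Or.inl hx.1)).resolve_right hxw, hx.2.trans hlt⟩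
  · have hwu : G.Adj w u :=
      ((htwin u).1 (Or.inr rfl)).resolve_right (by rintro rfl; exact hlt.ne rfl)
    exact lt_irrefl _ (mem_filter.1 (hsub (mem_filter.2 ⟨mem_univ _, hwu, hlt⟩))).2.2

lemma injOn_predCount_of_twins {S : Set V}
    (htwins : ∀ u ∈ S, ∀ w ∈ S, ∀ x, (G.Adj u x ∨ x = u) ↔ (G.Adj w x ∨ x = w)) :
    S.InjOn (predCount G σ) := by
  intro u hu w hw h
  by_contra hne
  rcases (σ.injective.ne hne).lt_or_gt with hlt | hlt
  · exact (predCount_lt_predCount_of_twins σ (htwins u hu w hw) hlt).ne h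
  · exact (predCount_lt_predCount_of_twins σ (htwins w hw u hu) hlt).ne' h

lemma sq_div_two_add_mod_two_le_sum_abs_of_twins [DecidableRel G.Adj] {C : Finset V}
    (htwins : ∀ u ∈ C, ∀ w ∈ C, ∀ x, (G.Adj u x ∨ x = u) ↔ (G.Adj w x ∨ x = w))
    (hdeg : ∀ u ∈ C, G.degree u = #C) :
    (#C : ℤ) ^ 2 / 2 + (#C : ℤ) % 2 ≤
      ∑ u ∈ C, |(predCount G σ u : ℤ) - succCount G σ u| := by
  refine (sq_div_two_add_mod_two_le_sum_abs C _ (injOn_predCount_of_twins σ htwins)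
    fun u hu => hdeg u hu ▸ predCount_le_degree G σ u).trans_eq (sum_congr rfl fun u hu => ?_)
  have hsum := predCount_add_succCount G σ u
  rw [hdeg u hu] at hsum
  rw [← hsum]
  push_cast
  congr 1
  ring

end VertexOrdering

lemma SimpleGraph.degree_eq_card_of_adj_iff {V : Type*} [Fintype V] [DecidableEq V]
    {G : SimpleGraph V} [DecidableRel G.Adj] {C : Finset V} {u v : V} (hu : u ∈ C) (hv : v ∉ C)
    (hadj : ∀ x, G.Adj u x ↔ x = v ∨ (x ∈ C ∧ x ≠ u)) : G.degree u = #C := by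
  have hnbr : G.neighborFinset u = insert v (C.erase u) := by
    ext x
    simp [hadj, and_comm]
  rw [← SimpleGraph.card_neighborFinset_eq_degree, hnbr, card_insert_of_notMem (by simp [hv]),
    card_erase_of_mem hu]
  have := card_pos.2 ⟨u, hu⟩
  omega

theorem stmt_13_general {V : Type*} [Fintype V] [DecidableEq V] (G : SimpleGraph V)
    (v : V) (r : ℕ) (C : Fin r → Finset V)
    -- the cliques are pairwise disjoint
    (hdisj : ∀ i j : Fin r, i ≠ j → Disjoint (C i) (C j))
    -- the cliques partition V \ {v}:
    (havoid : ∀ i : Fin r, v ∉ C i)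
    (hcover : ∀ u : V, u ≠ v → ∃ i : Fin r, u ∈ C i)
    -- the vertices of each clique are true twins in G
    (htwins : ∀ i : Fin r, ∀ u ∈ C i, ∀ w ∈ C i, ∀ x : V,
      (G.Adj u x ∨ x = u) ↔ (G.Adj w x ∨ x = w))
    -- each clique is indeed a clique
    (hclique : ∀ i : Fin r, ∀ u ∈ C i, ∀ w ∈ C i, u ≠ w → G.Adj u w)
    -- every vertex outside the cover is adjacent to the cover vertex v
    (hadj : ∀ i : Fin r, ∀ u ∈ C i, G.Adj v u)
    -- no edges between distinct cliques (they are distinct components of G - v)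
    (hcross : ∀ i j : Fin r, i ≠ j → ∀ u ∈ C i, ∀ w ∈ C j, ¬ G.Adj u w) :
    ∀ σ : V ≃ Fin (Fintype.card V),
      imbalance G σ ≥ ∑ i : Fin r, (((C i).card : ℤ) ^ 2 / 2 + ((C i).card : ℤ) % 2) := by
  classical
  intro σ
  have hnbr : ∀ i, ∀ u ∈ C i, ∀ x, G.Adj u x ↔ x = v ∨ (x ∈ C i ∧ x ≠ u) := by
    intro i u hu x
    refine ⟨fun h => ?_, ?_⟩
    · by_cases hxv : x = v
      · exact Or.inl hxv
      obtain ⟨j, hj⟩ := hcover x hxv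
      by_cases hji : j = i
      · exact Or.inr ⟨hji ▸ hj, h.ne'⟩
      · exact absurd h (hcross i j (Ne.symm hji) u hu x hj)
    · rintro (rfl | ⟨hx, hxu⟩)
      exacts [(hadj i u hu).symm, hclique i u hu x hx hxu.symm]
  have hclique_bound i := sq_div_two_add_mod_two_le_sum_abs_of_twins σ (htwins i)
    fun u hu => SimpleGraph.degree_eq_card_of_adj_iff hu (havoid i) (hnbr i u hu)
  calc ∑ i : Fin r, (((C i).card : ℤ) ^ 2 / 2 + ((C i).card : ℤ) % 2)
      ≤ ∑ i : Fin r, ∑ u ∈ C i, |(predCount G σ u : ℤ) - succCount G σ u| :=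
        sum_le_sum fun i _ => hclique_bound i
    _ = ∑ u ∈ univ.biUnion C, |(predCount G σ u : ℤ) - succCount G σ u| :=
        (sum_biUnion fun i _ j _ hij => hdisj i j hij).symm
    _ ≤ imbalance G σ :=
        sum_le_sum_of_subset_of_nonneg (subset_univ _) fun u _ _ => abs_nonneg _

theorem stmt_13 {V : Type*} [Fintype V] [DecidableEq V] (G : SimpleGraph V)
    (hconn : G.Connected) (v : V) (r : ℕ) (C : Fin r → Finset V)
    -- the cliques are pairwise disjoint
    (hdisj : ∀ i j : Fin r, i ≠ j → Disjoint (C i) (C j))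
    -- the cliques partition V \ {v}:
    (havoid : ∀ i : Fin r, v ∉ C i)
    (hcover : ∀ u : V, u ≠ v → ∃ i : Fin r, u ∈ C i)
    -- the vertices of each clique are true twins in G
    (htwins : ∀ i : Fin r, ∀ u ∈ C i, ∀ w ∈ C i, ∀ x : V,
      (G.Adj u x ∨ x = u) ↔ (G.Adj w x ∨ x = w))
    -- each clique is indeed a clique
    (hclique : ∀ i : Fin r, ∀ u ∈ C i, ∀ w ∈ C i, u ≠ w → G.Adj u w)
    -- every vertex outside the cover is adjacent to the cover vertex v
    (hadj : ∀ i : Fin r, ∀ u ∈ C i, G.Adj v u)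
    -- no edges between distinct cliques (they are distinct components of G - v)
    (hcross : ∀ i j : Fin r, i ≠ j → ∀ u ∈ C i, ∀ w ∈ C j, ¬ G.Adj u w) :
    ∀ σ : V ≃ Fin (Fintype.card V),
      imbalance G σ ≥ ∑ i : Fin r, (((C i).card : ℤ) ^ 2 / 2 + ((C i).card : ℤ) % 2) :=
  stmt_13_general G v r C hdisj havoid hcover htwins hclique hadj hcross
end
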